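/- For any boxed set Γ of ∪-gates in a single box of a complete structured DNNF, the captured set S(Γ) := ⋃_{g∈Γ} S(g) equals the disjoint union, over all boxes B' intersecting ⇝∪-reachable gates of Γ, of the union over var-gates and ×-gates g' in B' that have a ∪-only path to some gate of Γ, of S(g'); the outer union over distinct boxes B' is disjoint. -/
import Mathlib


/-- Positions in binary trees (paths from the root; `false` = left, `true` = right). -/
abbrev BPos := List Bool

inductive GateType where
  | top | bot | var | times | cup
deriving DecidableEq

/-- A set circuit: a DAG of gates typed ⊤, ⊥, var, ×, ∪.  `wire g' g` means `g'` is an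
input of `g`. -/
structure SetCircuit (V G : Type) where
  gtype : G → GateType
  wire : G → G → Prop
  varLabel : G → Set V
  varLabel_inj : ∀ g g', gtype g = GateType.var → gtype g' = GateType.var →
      varLabel g = varLabel g' → g = g'
  source_no_input : ∀ g, (gtype g = GateType.top ∨ gtype g = GateType.bot ∨
      gtype g = GateType.var) → ∀ g', ¬ wire g' g
  const_no_output : ∀ g, (gtype g = GateType.top ∨ gtype g = GateType.bot) → ∀ g', ¬ wire g g'
  times_two : ∀ g, gtype g = GateType.times → ∃ g₁ g₂, g₁ ≠ g₂ ∧ wire g₁ g ∧ wire g₂ g ∧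
      ∀ g', wire g' g → g' = g₁ ∨ g' = g₂
  cup_one : ∀ g, gtype g = GateType.cup → ∃ g', wire g' g

/-- `Captures C g S` : the set `S` of variables belongs to the set `S(g)` captured by
gate `g`, following the inductive semantics of set circuits. -/
inductive Captures {V G : Type} (C : SetCircuit V G) : G → Set V → Prop
  | var {g} : C.gtype g = GateType.var → Captures C g (C.varLabel g)
  | top {g} : C.gtype g = GateType.top → Captures C g ∅
  | times {g g₁ g₂ S₁ S₂} : C.gtype g = GateType.times → C.wire g₁ g → C.wire g₂ g →
      g₁ ≠ g₂ → Captures C g₁ S₁ → Captures C g₂ S₂ → Captures C g (S₁ ∪ S₂)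
  | cup {g g' S} : C.gtype g = GateType.cup → C.wire g' g → Captures C g' S → Captures C g S

/-- `CupPath C g' g` : there is a wire-path from `g'` to `g` all of whose gates strictly
between `g'` and `g` are ∪-gates. -/
inductive CupPath {V G : Type} (C : SetCircuit V G) : G → G → Prop
  | single {g' g} : C.wire g' g → CupPath C g' g
  | cons {g' m g} : C.wire g' m → C.gtype m = GateType.cup → CupPath C m g → CupPath C g' g

/-- A v-tree: a binary tree whose leaves are labeled by sets of variables. -/
inductive VTree (V : Type) where
  | leaf (vars : Set V)
  | node (l r : VTree V)

/-- The subtree of a v-tree at a position (if any). -/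
def VTree.sub {V : Type} : VTree V → BPos → Option (VTree V)
  | t, [] => some t
  | VTree.leaf _, _ :: _ => none
  | VTree.node l r, b :: p => VTree.sub (if b then r else l) p

/-- Variables occurring in (the leaves of) a v-tree. -/
def VTree.vars {V : Type} : VTree V → Set V
  | VTree.leaf vs => vs
  | VTree.node l r => l.vars ∪ r.vars

/-- Variables occurring below a given position of a v-tree. -/
def VTree.varsAt {V : Type} (t : VTree V) (p : BPos) : Set V :=
  match t.sub p with
  | some s => s.vars
  | none => ∅

/-- A complete structured DNNF: a set circuit together with a v-tree and a structuring
function `σ` mapping each gate to a (valid) position of the v-tree (its box). -/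
structure StructuredDNNF (V G : Type) extends SetCircuit V G where
  vtree : VTree V
  σ : G → BPos
  σ_valid : ∀ g, (vtree.sub (σ g)).isSome
  var_leaf : ∀ g, gtype g = GateType.var →
      ∃ vs, vtree.sub (σ g) = some (VTree.leaf vs) ∧ varLabel g ⊆ vs
  var_nonempty : ∀ g, gtype g = GateType.var → (varLabel g).Nonempty
  wire_struct : ∀ g' g, wire g' g →
      σ g' = σ g ∨ (gtype g' = GateType.cup ∧ ∃ b, σ g' = σ g ++ [b])
  times_children : ∀ g, gtype g = GateType.times →
      (∃ g₁, wire g₁ g ∧ σ g₁ = σ g ++ [false]) ∧ (∃ g₂, wire g₂ g ∧ σ g₂ = σ g ++ [true])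
  leaves_disjoint : ∀ p₁ p₂ vs₁ vs₂, vtree.sub p₁ = some (VTree.leaf vs₁) →
      vtree.sub p₂ = some (VTree.leaf vs₂) → p₁ ≠ p₂ → Disjoint vs₁ vs₂

section Aux

variable {V G : Type}

lemma VTree.sub_append (t : VTree V) (p q : BPos) :
    t.sub (p ++ q) = (t.sub p).bind (fun s => s.sub q) := by
  induction p generalizing t with
  | nil => simp [VTree.sub]
  | cons b p ih =>
    cases t with
    | leaf vs => simp [VTree.sub]
    | node l r => cases b <;> simp [VTree.sub, ih]

lemma VTree.mem_vars_exists {t : VTree V} {x : V} (hx : x ∈ t.vars) :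
    ∃ s vs, t.sub s = some (VTree.leaf vs) ∧ x ∈ vs := by
  induction t with
  | leaf vs => exact ⟨[], vs, rfl, hx⟩
  | node l r ih₁ ih₂ =>
    rcases hx with h | h
    · obtain ⟨s, vs, hs, hx⟩ := ih₁ h
      exact ⟨false :: s, vs, by simpa [VTree.sub] using hs, hx⟩
    · obtain ⟨s, vs, hs, hx⟩ := ih₂ h
      exact ⟨true :: s, vs, by simpa [VTree.sub] using hs, hx⟩

lemma VTree.vars_subset_of_sub {t s : VTree V} {q : BPos} (h : t.sub q = some s) :
    s.vars ⊆ t.vars := by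
  induction q generalizing t with
  | nil => simp [VTree.sub] at h; subst h; exact subset_rfl
  | cons b q ih =>
    cases t with
    | leaf vs => simp [VTree.sub] at h
    | node l r =>
      cases b
      · exact (ih (by simpa [VTree.sub] using h)).trans Set.subset_union_left
      · exact (ih (by simpa [VTree.sub] using h)).trans Set.subset_union_right

lemma VTree.varsAt_append_subset (t : VTree V) (p q : BPos) :
    t.varsAt (p ++ q) ⊆ t.varsAt p := by
  unfold VTree.varsAt
  rw [VTree.sub_append]
  cases hp : t.sub p with
  | none => simp
  | some s =>
    simp only [Option.bind_some]
    cases hq : s.sub q with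
    | none => simp
    | some s' => exact VTree.vars_subset_of_sub hq

/-- Positions of two subtrees containing a common variable are comparable. -/
lemma varsAt_comparable (D : StructuredDNNF V G) {p q : BPos} {x : V}
    (hp : x ∈ D.vtree.varsAt p) (hq : x ∈ D.vtree.varsAt q) :
    p <+: q ∨ q <+: p := by
  unfold VTree.varsAt at hp hq
  rcases h1 : D.vtree.sub p with _ | s₁ <;> rw [h1] at hp
  · exact absurd hp (Set.notMem_empty x)
  rcases h2 : D.vtree.sub q with _ | s₂ <;> rw [h2] at hq
  · exact absurd hq (Set.notMem_empty x)
  obtain ⟨u₁, vs₁, hu₁, hx₁⟩ := VTree.mem_vars_exists hp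
  obtain ⟨u₂, vs₂, hu₂, hx₂⟩ := VTree.mem_vars_exists hq
  have e₁ : D.vtree.sub (p ++ u₁) = some (VTree.leaf vs₁) := by
    rw [VTree.sub_append, h1]; simpa using hu₁
  have e₂ : D.vtree.sub (q ++ u₂) = some (VTree.leaf vs₂) := by
    rw [VTree.sub_append, h2]; simpa using hu₂
  have heq : p ++ u₁ = q ++ u₂ := by
    by_contra hne
    exact Set.disjoint_left.1 (D.leaves_disjoint _ _ _ _ e₁ e₂ hne) hx₁ hx₂
  have h₁ : p <+: (p ++ u₁) := ⟨u₁, rfl⟩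
  have h₂ : q <+: (p ++ u₁) := heq ▸ ⟨u₂, rfl⟩
  exact List.prefix_or_prefix_of_prefix h₁ h₂

lemma box_mono (D : StructuredDNNF V G) {g' g : G} (hw : D.wire g' g) :
    D.vtree.varsAt (D.σ g') ⊆ D.vtree.varsAt (D.σ g) := by
  rcases D.wire_struct g' g hw with h | ⟨_, b, h⟩
  · rw [h]
  · rw [h]; exact VTree.varsAt_append_subset _ _ _

lemma captures_subset (D : StructuredDNNF V G) {g : G} {S : Set V}
    (hc : Captures D.toSetCircuit g S) : S ⊆ D.vtree.varsAt (D.σ g) := by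
  induction hc with
  | var h =>
    obtain ⟨vs, hvs, hsub⟩ := D.var_leaf _ h
    unfold VTree.varsAt; rw [hvs]; exact hsub
  | top h => simp
  | times h hw₁ hw₂ hne hc₁ hc₂ ih₁ ih₂ =>
    exact Set.union_subset (ih₁.trans (box_mono D hw₁)) (ih₂.trans (box_mono D hw₂))
  | cup h hw hc ih => exact ih.trans (box_mono D hw)

lemma captures_nonempty (D : StructuredDNNF V G) {g : G} {S : Set V}
    (hc : Captures D.toSetCircuit g S) (hg : D.gtype g ≠ GateType.top) : S.Nonempty := by
  induction hc with
  | var h => exact D.var_nonempty _ h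
  | top h => exact absurd h hg
  | times h hw₁ hw₂ hne hc₁ hc₂ ih₁ ih₂ =>
    have : D.gtype _ ≠ GateType.top := fun ht =>
      D.const_no_output _ (Or.inl ht) _ hw₁
    exact (ih₁ this).mono Set.subset_union_left
  | cup h hw hc ih =>
    exact ih fun ht => D.const_no_output _ (Or.inl ht) _ hw

/-- A ×-gate's captured set meets the variables of each child subtree. -/
lemma times_meets (D : StructuredDNNF V G) {g : G} {S : Set V}
    (hg : D.gtype g = GateType.times) (hc : Captures D.toSetCircuit g S) (b : Bool) :
    ∃ x ∈ S, x ∈ D.vtree.varsAt (D.σ g ++ [b]) := by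
  cases hc with
  | var h => rw [h] at hg; cases hg
  | top h => rw [h] at hg; cases hg
  | cup h => rw [h] at hg; cases hg
  | times h hw₁ hw₂ hne hc₁ hc₂ =>
    rename_i g₁ g₂ S₁ S₂
    obtain ⟨hl, hr⟩ := D.times_children g hg
    obtain ⟨c, hwc, hσc⟩ : ∃ c, D.wire c g ∧ D.σ c = D.σ g ++ [b] := by
      cases b
      · exact hl
      · exact hr
    obtain ⟨a₁, a₂, hane, hwa₁, hwa₂, hall⟩ := D.times_two g hg
    have hmemc : c = g₁ ∨ c = g₂ := by
      rcases hall c hwc with rfl | rfl <;> rcases hall g₁ hw₁ with rfl | rfl <;>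
        rcases hall g₂ hw₂ with rfl | rfl <;> tauto
    rcases hmemc with rfl | rfl
    · have hne₁ : D.gtype c ≠ GateType.top := fun ht =>
        D.const_no_output _ (Or.inl ht) _ hw₁
      obtain ⟨x, hx⟩ := captures_nonempty D hc₁ hne₁
      exact ⟨x, Or.inl hx, hσc ▸ captures_subset D hc₁ hx⟩
    · have hne₂ : D.gtype c ≠ GateType.top := fun ht =>
        D.const_no_output _ (Or.inl ht) _ hw₂
      obtain ⟨x, hx⟩ := captures_nonempty D hc₂ hne₂
      exact ⟨x, Or.inr hx, hσc ▸ captures_subset D hc₂ hx⟩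

/-- Core of disjointness: a var/×-gate cannot capture a set living strictly below its box. -/
lemma not_below (D : StructuredDNNF V G) {g : G} {S : Set V} {q : BPos}
    (h1 : D.gtype g = GateType.var ∨ D.gtype g = GateType.times)
    (hc : Captures D.toSetCircuit g S)
    (hpre : D.σ g <+: q) (hne : D.σ g ≠ q)
    (hSq : S ⊆ D.vtree.varsAt q) : False := by
  obtain ⟨t, rfl⟩ := hpre
  have hgt : D.gtype g ≠ GateType.top := by
    rcases h1 with h | h <;> simp [h]
  obtain ⟨x₀, hx₀⟩ := captures_nonempty D hc hgt
  cases t with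
  | nil => exact hne (by simp)
  | cons b t' =>
    rcases h1 with hv | ht
    · obtain ⟨vs, hvs, _⟩ := D.var_leaf _ hv
      have : x₀ ∈ D.vtree.varsAt (D.σ g ++ b :: t') := hSq hx₀
      unfold VTree.varsAt at this
      rw [VTree.sub_append, hvs] at this
      simp [VTree.sub] at this
    · obtain ⟨x, hxS, hxb⟩ := times_meets D ht hc (!b)
      have hxq : x ∈ D.vtree.varsAt (D.σ g ++ b :: t') := hSq hxS
      rcases varsAt_comparable D hxb hxq with ⟨u, hu⟩ | ⟨u, hu⟩
      · rw [List.append_assoc] at hu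
        have := List.append_cancel_left hu
        simp at this
      · rw [List.append_assoc] at hu
        have := List.append_cancel_left hu
        cases b <;> simp at this

/-- Forward direction of the set equality. -/
lemma fwd (D : StructuredDNNF V G) {g : G} {S : Set V}
    (hc : Captures D.toSetCircuit g S) :
    ∀ gt, D.gtype g = GateType.cup →
      (g = gt ∨ CupPath D.toSetCircuit g gt) →
      ∃ g', (D.gtype g' = GateType.var ∨ D.gtype g' = GateType.times) ∧
        CupPath D.toSetCircuit g' gt ∧ Captures D.toSetCircuit g' S := by
  induction hc with
  | var h => intro gt hcup _; rw [h] at hcup; cases hcup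
  | top h => intro gt hcup _; rw [h] at hcup; cases hcup
  | times h _ _ _ _ _ _ _ => intro gt hcup _; rw [h] at hcup; cases hcup
  | cup h hw hc' ih =>
    rename_i ga gb Sb
    intro gt _ hpath
    have hpath' : CupPath D.toSetCircuit gb gt := by
      rcases hpath with rfl | hp
      · exact CupPath.single hw
      · exact CupPath.cons hw h hp
    rcases hgt : D.gtype gb with _ | _ | _ | _ | _
    · exact absurd hw (D.const_no_output gb (Or.inl hgt) ga)
    · exact absurd hw (D.const_no_output gb (Or.inr hgt) ga)
    · exact ⟨gb, Or.inl hgt, hpath', hc'⟩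
    · exact ⟨gb, Or.inr hgt, hpath', hc'⟩
    · exact ih gt hgt (Or.inr hpath')

lemma bwd (D : StructuredDNNF V G) {g' g : G} {S : Set V}
    (hp : CupPath D.toSetCircuit g' g) (hg : D.gtype g = GateType.cup)
    (hc : Captures D.toSetCircuit g' S) : Captures D.toSetCircuit g S := by
  induction hp generalizing S with
  | single hw => exact Captures.cup hg hw hc
  | cons hw hm _ ih => exact ih hg (Captures.cup hm hw hc)

end Aux

/-- for a boxed set `Γ` of ∪-gates in box `p₀`, `S(Γ) = ⋃_{g∈Γ} S(g)`
equals the union over the var- and ×-gates having a ∪-only path to `Γ` of their captured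
sets, and this union is disjoint across distinct boxes. -/


theorem stmt11 {V G : Type} (D : StructuredDNNF V G) (p₀ : BPos) (Γ : Set G)
    (hΓ : ∀ g ∈ Γ, D.gtype g = GateType.cup ∧ D.σ g = p₀) :
    ({S : Set V | ∃ g ∈ Γ, Captures D.toSetCircuit g S} =
      {S : Set V | ∃ g', (D.gtype g' = GateType.var ∨ D.gtype g' = GateType.times) ∧
        (∃ g ∈ Γ, CupPath D.toSetCircuit g' g) ∧ Captures D.toSetCircuit g' S}) ∧
    (∀ g₁ g₂ : G,
      (D.gtype g₁ = GateType.var ∨ D.gtype g₁ = GateType.times) →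
      (D.gtype g₂ = GateType.var ∨ D.gtype g₂ = GateType.times) →
      (∃ g ∈ Γ, CupPath D.toSetCircuit g₁ g) → (∃ g ∈ Γ, CupPath D.toSetCircuit g₂ g) →
      D.σ g₁ ≠ D.σ g₂ →
      ∀ S : Set V, ¬ (Captures D.toSetCircuit g₁ S ∧ Captures D.toSetCircuit g₂ S)) := by
  constructor
  · ext S
    simp only [Set.mem_setOf_eq]
    constructor
    · rintro ⟨g, hg, hc⟩
      obtain ⟨g', h1, hp, hc'⟩ := fwd D hc g (hΓ g hg).1 (Or.inl rfl)
      exact ⟨g', h1, ⟨g, hg, hp⟩, hc'⟩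
    · rintro ⟨g', h1, ⟨g, hg, hp⟩, hc⟩
      exact ⟨g, hg, bwd D hp (hΓ g hg).1 hc⟩
  · rintro g₁ g₂ h1 h2 _ _ hne S ⟨hc₁, hc₂⟩
    have hs₁ := captures_subset D hc₁
    have hs₂ := captures_subset D hc₂
    have hgt : D.gtype g₁ ≠ GateType.top := by
      rcases h1 with h | h <;> simp [h]
    obtain ⟨x₀, hx₀⟩ := captures_nonempty D hc₁ hgt
    rcases varsAt_comparable D (hs₁ hx₀) (hs₂ hx₀) with hp | hp
    · exact not_below D h1 hc₁ hp hne hs₂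
    · exact not_below D h2 hc₂ hp hne.symm hs₁
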